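/- arXiv:1201.1682 — 2 statements merged into one kernel-verified Lean document; each statement's English description precedes it below -/
import Mathlib

section
/- Let (Ω, β, μ) be a finite measure space and X a reflexive Banach space. If (f_n) ⊂ L_1(Ω, X) converges almost everywhere to f* (in the X-norm) and h(ω) = sup_n ‖f_n(ω)‖_X is integrable, and (F_n) is an increasing sequence of σ-subalgebras with F_n ↑ F_∞, then E(f_{n₁} | F_{n₂}) → E(f* | F_∞) almost everywhere as n₁, n₂ → ∞ independently. -/
open MeasureTheory Filter Topology
open scoped ENNReal

/-!
Put `G_N := sup_{n ≥ N} ‖f_n - f*‖`. For `n₁ ≥ N`,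
`‖E(f_{n₁} | F_{n₂}) - E(f* | F_∞)‖ ≤ E(G_N | F_{n₂}) + ‖E(f* | F_{n₂}) - E(f* | F_∞)‖`,
and by Lévy's upward theorem the right-hand side tends a.e. to `E(G_N | F_∞)` as `n₂ → ∞`.
So the limsup of the left-hand side is at most `E(G_N | F_∞)`, whose integral `∫ G_N` tends to
`0` by dominated convergence (`G_N ≤ 2 sup_n ‖f_n‖`); hence the limsup vanishes a.e.

Lévy's upward theorem for `X`-valued functions follows from the real one: it holds for simple
functions by linearity, and approximating `g` in `L¹` by a simple function `s` bounds the limsup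
of `‖E(g | F_n) - E(g | F_∞)‖` by `2 E(‖g - s‖ | F_∞)`.
-/

section Limsup

variable {Ω α E : Type*} {m0 : MeasurableSpace Ω} {μ : Measure Ω} {l : Filter α}

theorem ae_tendsto_of_limsup_edist_le [PseudoEMetricSpace E] {u : α → Ω → E} {v : Ω → E}
    {B : ℕ → Ω → ℝ≥0∞} (hB : ∀ k, AEMeasurable (B k) μ)
    (hB_int : Tendsto (fun k => ∫⁻ x, B k x ∂μ) atTop (𝓝 0))
    (hlim : ∀ k, ∀ᵐ x ∂μ, limsup (fun a => edist (u a x) (v x)) l ≤ B k x) :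
    ∀ᵐ x ∂μ, Tendsto (fun a => u a x) l (𝓝 (v x)) := by
  have hinf : ∫⁻ x, ⨅ k, B k x ∂μ = 0 :=
    le_antisymm (ge_of_tendsto' hB_int fun k => lintegral_mono fun x => iInf_le _ k) zero_le
  filter_upwards [(lintegral_eq_zero_iff' (AEMeasurable.iInf hB)).1 hinf, ae_all_iff.2 hlim]
    with x hx hxk
  rw [tendsto_iff_edist_tendsto_0]
  exact tendsto_of_le_liminf_of_limsup_le zero_le ((le_iInf hxk).trans_eq hx)

theorem limsup_edist_le_ofReal_of_tendsto [PseudoMetricSpace E] [l.NeBot] {u : α → E} {v : E}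
    {w : α → ℝ} {W : ℝ} (hw : Tendsto w l (𝓝 W)) (huw : ∀ᶠ a in l, dist (u a) v ≤ w a) :
    limsup (fun a => edist (u a) v) l ≤ ENNReal.ofReal W :=
  calc limsup (fun a => edist (u a) v) l ≤ limsup (fun a => ENNReal.ofReal (w a)) l :=
        limsup_le_limsup (huw.mono fun a ha =>
          (edist_dist _ _).trans_le (ENNReal.ofReal_le_ofReal ha))
    _ = ENNReal.ofReal W := (ENNReal.tendsto_ofReal hw).limsup_eq

end Limsup

section CondExp

variable {Ω X : Type*} {m m0 : MeasurableSpace Ω} {μ : Measure Ω}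
  [NormedAddCommGroup X] [NormedSpace ℝ X] [CompleteSpace X]

theorem ae_norm_condExp_sub_le {g h : Ω → X} {ψ : Ω → ℝ} (hg : Integrable g μ)
    (hh : Integrable h μ) (hψ : Integrable ψ μ) (hgh : ∀ᵐ x ∂μ, ‖g x - h x‖ ≤ ψ x) :
    ∀ᵐ x ∂μ, ‖μ[g|m] x - μ[h|m] x‖ ≤ μ[ψ|m] x := by
  filter_upwards [condExp_sub hg hh m, norm_condExp_le (m := m) (μ := μ) (g - h),
    condExp_mono (m := m) (hg.sub hh).norm hψ hgh] with x hsub hnorm hmono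
  rw [← Pi.sub_apply, ← hsub]
  exact hnorm.trans hmono

theorem lintegral_ofReal_condExp (hm : m ≤ m0) [SigmaFinite (μ.trim hm)] {φ : Ω → ℝ}
    (hφ : 0 ≤ᵐ[μ] φ) :
    ∫⁻ x, ENNReal.ofReal (μ[φ|m] x) ∂μ = ENNReal.ofReal (∫ x, φ x ∂μ) := by
  rw [← ofReal_integral_eq_lintegral_ofReal integrable_condExp (condExp_nonneg hφ),
    integral_condExp hm]

end CondExp

section TailSup

variable {E : Type*} [PseudoMetricSpace E]

/-- `sup_{n ≥ N} dist (u n) y`; the real `⨆` is junk (`0`) unless these distances are bounded,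
which they are when `u` converges. -/
noncomputable def tailSupDist (u : ℕ → E) (y : E) (N : ℕ) : ℝ :=
  ⨆ k, dist (u (k + N)) y

variable {u : ℕ → E} {y : E}

theorem tailSupDist_nonneg (u : ℕ → E) (y : E) (N : ℕ) : 0 ≤ tailSupDist u y N :=
  Real.iSup_nonneg fun _ => dist_nonneg

theorem dist_le_tailSupDist (hu : Tendsto u atTop (𝓝 y)) (N k : ℕ) :
    dist (u (k + N)) y ≤ tailSupDist u y N :=
  le_ciSup ((hu.comp (tendsto_add_atTop_nat N)).dist tendsto_const_nhds).bddAbove_range k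

theorem tendsto_tailSupDist (hu : Tendsto u atTop (𝓝 y)) :
    Tendsto (tailSupDist u y) atTop (𝓝 0) := by
  refine Metric.tendsto_atTop.2 fun ε hε => ?_
  obtain ⟨N₀, hN₀⟩ := Metric.tendsto_atTop.1 hu (ε / 2) (half_pos hε)
  refine ⟨N₀, fun N hN => ?_⟩
  rw [Real.dist_0_eq_abs, abs_of_nonneg (tailSupDist_nonneg u y N)]
  exact (ciSup_le fun k => (hN₀ (k + N) (by omega)).le).trans_lt (half_lt_self hε)

theorem tailSupDist_le_two_mul_iSup_norm {X : Type*} [SeminormedAddCommGroup X] {u : ℕ → X}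
    {y : X} (hu : Tendsto u atTop (𝓝 y)) (N : ℕ) : tailSupDist u y N ≤ 2 * ⨆ n, ‖u n‖ := by
  have hbdd := hu.norm.bddAbove_range
  have hy : ‖y‖ ≤ ⨆ n, ‖u n‖ := le_of_tendsto' hu.norm fun n => le_ciSup hbdd n
  refine ciSup_le fun k => ?_
  rw [dist_eq_norm, two_mul]
  exact (norm_sub_le _ _).trans (add_le_add (le_ciSup hbdd _) hy)

variable {Ω X : Type*} {m0 : MeasurableSpace Ω} {μ : Measure Ω} [NormedAddCommGroup X]
  {f : ℕ → Ω → X} {g : Ω → X}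

theorem aestronglyMeasurable_tailSupDist (hf : ∀ n, AEStronglyMeasurable (f n) μ)
    (hg : AEStronglyMeasurable g μ) (N : ℕ) :
    AEStronglyMeasurable (fun x => tailSupDist (f · x) (g x) N) μ := by
  simp only [tailSupDist, dist_eq_norm]
  exact (AEMeasurable.iSup fun k => ((hf (k + N)).sub hg).norm.aemeasurable).aestronglyMeasurable

theorem ae_tailSupDist_le (h_ae : ∀ᵐ x ∂μ, Tendsto (f · x) atTop (𝓝 (g x))) (N : ℕ) :
    ∀ᵐ x ∂μ, ‖tailSupDist (f · x) (g x) N‖ ≤ 2 * ⨆ n, ‖f n x‖ :=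
  h_ae.mono fun x hx => by
    rw [Real.norm_of_nonneg (tailSupDist_nonneg _ _ N)]
    exact tailSupDist_le_two_mul_iSup_norm hx N

theorem integrable_tailSupDist (hf : ∀ n, AEStronglyMeasurable (f n) μ)
    (hg : AEStronglyMeasurable g μ) (h_ae : ∀ᵐ x ∂μ, Tendsto (f · x) atTop (𝓝 (g x)))
    (hsup : Integrable (fun x => ⨆ n, ‖f n x‖) μ) (N : ℕ) :
    Integrable (fun x => tailSupDist (f · x) (g x) N) μ :=
  (hsup.const_mul 2).mono' (aestronglyMeasurable_tailSupDist hf hg N) (ae_tailSupDist_le h_ae N)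

theorem tendsto_integral_tailSupDist (hf : ∀ n, AEStronglyMeasurable (f n) μ)
    (hg : AEStronglyMeasurable g μ) (h_ae : ∀ᵐ x ∂μ, Tendsto (f · x) atTop (𝓝 (g x)))
    (hsup : Integrable (fun x => ⨆ n, ‖f n x‖) μ) :
    Tendsto (fun N => ∫ x, tailSupDist (f · x) (g x) N ∂μ) atTop (𝓝 0) := by
  simpa using tendsto_integral_of_dominated_convergence _ (aestronglyMeasurable_tailSupDist hf hg)
    (hsup.const_mul 2) (ae_tailSupDist_le h_ae) (h_ae.mono fun x hx => tendsto_tailSupDist hx)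

end TailSup

section Levy

variable {Ω X : Type*} {m0 : MeasurableSpace Ω} {μ : Measure Ω} [IsFiniteMeasure μ]
  [NormedAddCommGroup X] [NormedSpace ℝ X] [CompleteSpace X] (ℱ : Filtration ℕ m0)

theorem tendsto_ae_condExp_comp_clm {φ : Ω → ℝ} (hφ : Integrable φ μ) (T : ℝ →L[ℝ] X) :
    ∀ᵐ x ∂μ, Tendsto (fun n => μ[T ∘ φ|ℱ n] x) atTop (𝓝 (μ[T ∘ φ|⨆ n, ℱ n] x)) := by
  filter_upwards [tendsto_ae_condExp (ℱ := ℱ) φ,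
    ae_all_iff.2 fun n => T.comp_condExp_comm hφ (m := ℱ n),
    T.comp_condExp_comm hφ (m := ⨆ n, ℱ n)] with x hx hn hsup
  rw [← hsup]
  exact ((T.continuous.tendsto _).comp hx).congr hn

theorem tendsto_ae_condExp_simpleFunc (s : SimpleFunc Ω X) :
    ∀ᵐ x ∂μ, Tendsto (fun n => μ[s|ℱ n] x) atTop (𝓝 (μ[s|⨆ n, ℱ n] x)) := by
  induction s using SimpleFunc.induction with
  | @const c A hA =>
    have hcoe : ⇑(SimpleFunc.piecewise A hA (.const Ω c) (.const Ω 0)) =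
        ContinuousLinearMap.toSpanSingleton ℝ c ∘ A.indicator 1 := by
      ext x; by_cases hx : x ∈ A <;> simp [hx]
    rw [hcoe]
    exact tendsto_ae_condExp_comp_clm ℱ ((integrable_const 1).indicator hA) _
  | @add f g _ hf hg =>
    have hfi := f.integrable_of_isFiniteMeasure (μ := μ)
    have hgi := g.integrable_of_isFiniteMeasure (μ := μ)
    filter_upwards [hf, hg, ae_all_iff.2 fun n => condExp_add hfi hgi (ℱ n),
      condExp_add hfi hgi (⨆ n, ℱ n)] with x hfx hgx hn hsup
    rw [SimpleFunc.coe_add, hsup]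
    exact (hfx.add hgx).congr fun n => (hn n).symm

theorem ae_limsup_edist_condExp_le_simpleFunc {g : Ω → X} (hg : Integrable g μ)
    (s : SimpleFunc Ω X) :
    ∀ᵐ x ∂μ, limsup (fun n => edist (μ[g|ℱ n] x) (μ[g|⨆ n, ℱ n] x)) atTop ≤
      2 * ENNReal.ofReal (μ[fun y => ‖g y - s y‖|⨆ n, ℱ n] x) := by
  set ψ : Ω → ℝ := fun y => ‖g y - s y‖
  have hsi : Integrable s μ := s.integrable_of_isFiniteMeasure
  have hψ : Integrable ψ μ := (hg.sub hsi).norm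
  have hgs : ∀ᵐ x ∂μ, ‖g x - s x‖ ≤ ψ x := ae_of_all _ fun _ => le_rfl
  filter_upwards [ae_all_iff.2 fun n => ae_norm_condExp_sub_le (m := ℱ n) hg hsi hψ hgs,
    ae_norm_condExp_sub_le (m := ⨆ n, ℱ n) hg hsi hψ hgs,
    tendsto_ae_condExp_simpleFunc ℱ s, tendsto_ae_condExp (ℱ := ℱ) ψ] with x hn hsup hsx hψx
  refine (limsup_edist_le_ofReal_of_tendsto
    ((hψx.add (tendsto_iff_dist_tendsto_zero.1 hsx)).add_const (μ[ψ|⨆ n, ℱ n] x))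
    (Eventually.of_forall fun n => ?_)).trans_eq ?_
  · refine (dist_triangle4 _ (μ[s|ℱ n] x) (μ[s|⨆ n, ℱ n] x) _).trans ?_
    rw [dist_eq_norm (μ[g|ℱ n] x), dist_comm (μ[s|⨆ n, ℱ n] x), dist_eq_norm (μ[g|⨆ n, ℱ n] x)]
    gcongr
    exact hn n
  · rw [add_zero, ← two_mul, ENNReal.ofReal_mul zero_le_two, ENNReal.ofReal_ofNat]

theorem tendsto_ae_condExp_vector (g : Ω → X) :
    ∀ᵐ x ∂μ, Tendsto (fun n => μ[g|ℱ n] x) atTop (𝓝 (μ[g|⨆ n, ℱ n] x)) := by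
  by_cases hg : ¬Integrable g μ
  · simp [condExp_of_not_integrable hg]
  push Not at hg
  have hs : ∀ k : ℕ, ∃ s : SimpleFunc Ω X, eLpNorm (g - ⇑s) 1 μ < (k : ℝ≥0∞)⁻¹ := fun k =>
    ((memLp_one_iff_integrable.2 hg).exists_simpleFunc_eLpNorm_sub_lt ENNReal.one_ne_top
      (ENNReal.inv_ne_zero.2 (ENNReal.natCast_ne_top k))).imp fun _ h => h.1
  choose s hs using hs
  refine ae_tendsto_of_limsup_edist_le
    (fun k => integrable_condExp.aemeasurable.ennreal_ofReal.const_mul 2) ?_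
    fun k => ae_limsup_edist_condExp_le_simpleFunc ℱ hg (s k)
  have hint : ∀ k : ℕ, ∫⁻ x, 2 * ENNReal.ofReal (μ[fun y => ‖g y - s k y‖|⨆ n, ℱ n] x) ∂μ ≤
      2 * (k : ℝ≥0∞)⁻¹ := fun k => by
    rw [lintegral_const_mul' _ _ ENNReal.ofNat_ne_top,
      lintegral_ofReal_condExp (iSup_le ℱ.le) (ae_of_all _ fun _ => norm_nonneg _),
      ofReal_integral_norm_eq_lintegral_enorm (f := fun x => g x - s k x)
        (hg.sub (s k).integrable_of_isFiniteMeasure),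
      ← eLpNorm_one_eq_lintegral_enorm]
    gcongr
    exact (hs k).le
  have htwo : Tendsto (fun k : ℕ => 2 * (k : ℝ≥0∞)⁻¹) atTop (𝓝 0) := by
    simpa using ENNReal.Tendsto.const_mul ENNReal.tendsto_inv_nat_nhds_zero
      (Or.inr ENNReal.ofNat_ne_top)
  exact tendsto_of_tendsto_of_tendsto_of_le_of_le tendsto_const_nhds htwo (fun _ => zero_le) hint

theorem ae_limsup_edist_condExp_le {f : ℕ → Ω → X} {g : Ω → X} (hf : ∀ n, Integrable (f n) μ)
    (hg : Integrable g μ) (h_ae : ∀ᵐ x ∂μ, Tendsto (f · x) atTop (𝓝 (g x))) {N : ℕ}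
    (hG : Integrable (fun x => tailSupDist (f · x) (g x) N) μ) :
    ∀ᵐ x ∂μ, limsup (fun q : ℕ × ℕ => edist (μ[f q.1|ℱ q.2] x) (μ[g|⨆ n, ℱ n] x)) atTop ≤
      ENNReal.ofReal (μ[fun x => tailSupDist (f · x) (g x) N|⨆ n, ℱ n] x) := by
  set G := fun x => tailSupDist (f · x) (g x) N
  have hfG : ∀ k, ∀ᵐ x ∂μ, ‖f (k + N) x - g x‖ ≤ G x := fun k =>
    h_ae.mono fun x hx => (dist_eq_norm _ _).symm.trans_le (dist_le_tailSupDist hx N k)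
  filter_upwards [ae_all_iff.2 fun k => ae_all_iff.2 fun n =>
      ae_norm_condExp_sub_le (m := ℱ n) (hf (k + N)) hg hG (hfG k),
    tendsto_ae_condExp (ℱ := ℱ) G, tendsto_ae_condExp_vector ℱ g] with x hx hGx hgx
  have hsnd : Tendsto (Prod.snd : ℕ × ℕ → ℕ) atTop atTop :=
    tendsto_atTop_atTop.2 fun b => ⟨(0, b), fun q hq => hq.2⟩
  refine (limsup_edist_le_ofReal_of_tendsto
    ((hGx.add (tendsto_iff_dist_tendsto_zero.1 hgx)).comp hsnd)
    ((eventually_ge_atTop (N, 0)).mono fun q hq => ?_)).trans_eq (by rw [add_zero])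
  obtain ⟨k, hk⟩ := Nat.exists_eq_add_of_le' hq.1
  calc dist (μ[f q.1|ℱ q.2] x) (μ[g|⨆ n, ℱ n] x)
      ≤ dist (μ[f q.1|ℱ q.2] x) (μ[g|ℱ q.2] x) + dist (μ[g|ℱ q.2] x) (μ[g|⨆ n, ℱ n] x) :=
        dist_triangle _ _ _
    _ ≤ μ[G|ℱ q.2] x + dist (μ[g|ℱ q.2] x) (μ[g|⨆ n, ℱ n] x) := by
        rw [dist_eq_norm, hk]
        gcongr
        exact hx k q.2

end Levy

/-- If `f n → fstar` a.e. with integrable supremum `⨆ n, ‖f n ω‖`, and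
`F n ↑ Finf` is an increasing sequence of σ-subalgebras, then
`E(f n₁ | F n₂) → E(fstar | Finf)` a.e. as `n₁, n₂ → ∞` independently. -/
theorem stmt1 {Ω X : Type*} [MeasurableSpace Ω] [NormedAddCommGroup X] [NormedSpace ℝ X]
    [CompleteSpace X]
    (hX : Function.Surjective (NormedSpace.inclusionInDoubleDual ℝ X))
    (μ : Measure Ω) [IsFiniteMeasure μ]
    (f : ℕ → Ω → X) (fstar : Ω → X)
    (hf : ∀ n, Integrable (f n) μ) (hfstar : Integrable fstar μ)
    (h_ae : ∀ᵐ ω ∂μ, Tendsto (fun n => f n ω) atTop (𝓝 (fstar ω)))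
    (hsup : Integrable (fun ω => ⨆ n, ‖f n ω‖) μ)
    (F : ℕ → MeasurableSpace Ω) (hle : ∀ n, F n ≤ ‹MeasurableSpace Ω›)
    (hmono : Monotone F)
    (Finf : MeasurableSpace Ω) (hFinf : Finf = ⨆ n, F n) :
    ∀ᵐ ω ∂μ, Tendsto (fun q : ℕ × ℕ => (μ[f q.1 | F q.2]) ω) atTop
      (𝓝 ((μ[fstar | Finf]) ω)) := by
  subst hFinf
  let ℱ : Filtration ℕ ‹MeasurableSpace Ω› := ⟨F, hmono, hle⟩
  have hG := integrable_tailSupDist (fun n => (hf n).1) hfstar.1 h_ae hsup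
  refine ae_tendsto_of_limsup_edist_le (fun N => integrable_condExp.aemeasurable.ennreal_ofReal)
    ?_ fun N => ae_limsup_edist_condExp_le ℱ hf hfstar h_ae (hG N)
  simp_rw [lintegral_ofReal_condExp (iSup_le ℱ.le) (ae_of_all _ fun _ => tailSupDist_nonneg _ _ _)]
  simpa using ENNReal.tendsto_ofReal
    (tendsto_integral_tailSupDist (fun n => (hf n).1) hfstar.1 h_ae hsup)
end

section
/- Let T on L_1(Ω, X) be induced by a measure-preserving endomorphism, X reflexive, f ∈ L_1(Ω, X), and suppose sup_n ‖S_n f‖_X ∈ L_1(Ω, ℝ). Let f* be the a.e. limit of S_n f. Then for a monotone increasing sequence of σ-subalgebras F_n ↑ F_∞, E(S_{n₁} f | F_{n₂}) converges almost everywhere to E(f* | F_∞) as n₁, n₂ → ∞ independently; moreover ∫ E(f* | F_∞) dμ = ∫ f dμ. -/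
open MeasureTheory Filter Topology

/-!
The averages `S_n f` converge a.e. to `f*` and are dominated by the integrable function
`sup_n ‖S_n f‖`, so the convergence is an instance of a two-parameter Hunt lemma. With
`G_N = sup_{n ≥ N} ‖S_n f - f*‖` and `n₁ ≥ N`, conditional Jensen `‖E(g | F)‖ ≤ E(‖g‖ | F)` gives
`‖E(S_{n₁} f | F_{n₂}) - E(f* | F_∞)‖ ≤ E(G_N | F_{n₂}) + ‖E(f* | F_{n₂}) - E(f* | F_∞)‖`.
The second term tends to zero by Lévy's upward theorem, carried over from `ℝ` to Banach spaces by
`L¹` approximation; the first tends to `E(G_N | F_∞)` as `n₂ → ∞`, and since `∫ G_N → 0` by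
dominated convergence, `E(G_N | F_∞) → 0` a.e. along a subsequence of `N`.
The integral identity is dominated convergence applied to `∫ S_n f = ∫ f`.
-/

/-- Birkhoff (Cesàro) ergodic averages `S_n f = (1/n) ∑_{i<n} f ∘ τ^i`. -/
noncomputable def birkhoff {Ω X : Type*} [AddCommMonoid X] [Module ℝ X]
    (τ : Ω → Ω) (f : Ω → X) (n : ℕ) : Ω → X :=
  fun ω => (n : ℝ)⁻¹ • ∑ i ∈ Finset.range n, f (τ^[i] ω)

theorem tendsto_of_forall_eventually_dist_le {ι E : Type*} [PseudoMetricSpace E]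
    {l : Filter ι} {x : ι → E} {y : E} {b : ℕ → ι → ℝ} {c : ℕ → ℝ}
    (hb : ∀ k, Tendsto (b k) l (𝓝 (c k))) (hc : Tendsto c atTop (𝓝 0))
    (hxb : ∀ k, ∀ᶠ i in l, dist (x i) y ≤ b k i) :
    Tendsto x l (𝓝 y) := by
  refine Metric.tendsto_nhds.2 fun ε hε => ?_
  obtain ⟨k, hk⟩ := (hc.eventually (gt_mem_nhds hε)).exists
  filter_upwards [hxb k, (hb k).eventually (gt_mem_nhds hk)] with i hi hbi
  exact hi.trans_lt hbi

noncomputable def tailSup (u : ℕ → ℝ) (N : ℕ) : ℝ := ⨆ m, u (m + N)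

theorem le_tailSup {u : ℕ → ℝ} {N n : ℕ} (hu : BddAbove (Set.range u)) (hNn : N ≤ n) :
    u n ≤ tailSup u N := by
  have := le_ciSup (hu.mono (Set.range_comp_subset_range (· + N) u)) (n - N)
  rwa [Function.comp_apply, Nat.sub_add_cancel hNn] at this

theorem tailSup_le {u : ℕ → ℝ} {C : ℝ} (h : ∀ n, u n ≤ C) (N : ℕ) : tailSup u N ≤ C :=
  ciSup_le fun _ => h _

theorem tendsto_tailSup_of_tendsto_zero {u : ℕ → ℝ} (hu : Tendsto u atTop (𝓝 0))
    (hnn : ∀ n, 0 ≤ u n) : Tendsto (tailSup u) atTop (𝓝 0) := by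
  refine tendsto_order.2 ⟨fun a ha => Eventually.of_forall fun N =>
    ha.trans_le ((hnn N).trans (le_tailSup hu.bddAbove_range le_rfl)), fun a ha => ?_⟩
  obtain ⟨M, hM⟩ := eventually_atTop.1 (hu.eventually (gt_mem_nhds (half_pos ha)))
  refine eventually_atTop.2 ⟨M, fun N hN => ?_⟩
  have : tailSup u N ≤ a / 2 := ciSup_le fun m => (hM _ (by omega)).le
  linarith

section TailSup

variable {α : Type*} {m0 : MeasurableSpace α} {μ : Measure α} {u : ℕ → α → ℝ} {H : α → ℝ}

theorem ae_le_tailSup (huH : ∀ n, ∀ᵐ ω ∂μ, u n ω ≤ H ω) {N n : ℕ} (hNn : N ≤ n) :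
    u n ≤ᵐ[μ] fun ω => tailSup (u · ω) N := by
  filter_upwards [ae_all_iff.2 huH] with ω hω
  exact le_tailSup ⟨H ω, Set.forall_mem_range.2 hω⟩ hNn

theorem ae_norm_tailSup_le (hnn : ∀ n, 0 ≤ᵐ[μ] u n) (huH : ∀ n, ∀ᵐ ω ∂μ, u n ω ≤ H ω) (N : ℕ) :
    ∀ᵐ ω ∂μ, ‖tailSup (u · ω) N‖ ≤ H ω := by
  filter_upwards [(hnn N).trans (ae_le_tailSup huH le_rfl), ae_all_iff.2 huH] with ω h0 hH
  rw [Real.norm_of_nonneg h0]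
  exact tailSup_le hH N

theorem aestronglyMeasurable_tailSup (hu : ∀ n, AEStronglyMeasurable (u n) μ) (N : ℕ) :
    AEStronglyMeasurable (fun ω => tailSup (u · ω) N) μ :=
  (AEMeasurable.iSup fun m => (hu (m + N)).aemeasurable).aestronglyMeasurable

theorem integrable_tailSup (hu : ∀ n, AEStronglyMeasurable (u n) μ) (hH : Integrable H μ)
    (hnn : ∀ n, 0 ≤ᵐ[μ] u n) (huH : ∀ n, ∀ᵐ ω ∂μ, u n ω ≤ H ω) (N : ℕ) :
    Integrable (fun ω => tailSup (u · ω) N) μ :=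
  hH.mono' (aestronglyMeasurable_tailSup hu N) (ae_norm_tailSup_le hnn huH N)

theorem tendsto_integral_tailSup (hu : ∀ n, AEStronglyMeasurable (u n) μ) (hH : Integrable H μ)
    (hnn : ∀ n, 0 ≤ᵐ[μ] u n) (huH : ∀ n, ∀ᵐ ω ∂μ, u n ω ≤ H ω)
    (hlim : ∀ᵐ ω ∂μ, Tendsto (u · ω) atTop (𝓝 0)) :
    Tendsto (fun N => ∫ ω, tailSup (u · ω) N ∂μ) atTop (𝓝 0) := by
  have htail : ∀ᵐ ω ∂μ, Tendsto (tailSup (u · ω)) atTop (𝓝 0) := by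
    filter_upwards [hlim, ae_all_iff.2 hnn] with ω hω h0
    exact tendsto_tailSup_of_tendsto_zero hω h0
  simpa using tendsto_integral_of_dominated_convergence H (aestronglyMeasurable_tailSup hu) hH
    (ae_norm_tailSup_le hnn huH) htail

end TailSup

section CondExp

variable {α E : Type*} [NormedAddCommGroup E] [NormedSpace ℝ E] [CompleteSpace E]
  {m m0 : MeasurableSpace α} {μ : Measure α}

theorem exists_seq_tendsto_ae_of_tendsto_integral {u : ℕ → α → ℝ}
    (hu : ∀ N, Integrable (u N) μ) (hnn : ∀ N, 0 ≤ᵐ[μ] u N)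
    (h : Tendsto (fun N => ∫ ω, u N ω ∂μ) atTop (𝓝 0)) :
    ∃ ns : ℕ → ℕ, ∀ᵐ ω ∂μ, Tendsto (fun k => u (ns k) ω) atTop (𝓝 0) := by
  have hL1 : ∀ N, eLpNorm (u N - 0) 1 μ = ENNReal.ofReal (∫ ω, u N ω ∂μ) := fun N => by
    rw [sub_zero, eLpNorm_one_eq_lintegral_enorm,
      ofReal_integral_eq_lintegral_ofReal (hu N) (hnn N)]
    refine lintegral_congr_ae ((hnn N).mono fun ω hω => ?_)
    exact Real.enorm_of_nonneg hω
  have hL1_tendsto : Tendsto (fun N => eLpNorm (u N - 0) 1 μ) atTop (𝓝 0) := by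
    simpa only [hL1, ENNReal.ofReal_zero] using ENNReal.tendsto_ofReal h
  have hmeas : TendstoInMeasure μ u atTop 0 :=
    tendstoInMeasure_of_tendsto_eLpNorm one_ne_zero (fun N => (hu N).1)
      aestronglyMeasurable_const hL1_tendsto
  obtain ⟨ns, -, hns⟩ := hmeas.exists_seq_tendsto_ae
  exact ⟨ns, hns⟩

theorem exists_seq_tendsto_ae_condExp_of_tendsto_integral (hm : m ≤ m0)
    [SigmaFinite (μ.trim hm)] {u : ℕ → α → ℝ} (hnn : ∀ N, 0 ≤ᵐ[μ] u N)
    (h : Tendsto (fun N => ∫ ω, u N ω ∂μ) atTop (𝓝 0)) :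
    ∃ ns : ℕ → ℕ, ∀ᵐ ω ∂μ, Tendsto (fun k => (μ[u (ns k) | m]) ω) atTop (𝓝 0) :=
  exists_seq_tendsto_ae_of_tendsto_integral (fun _ => integrable_condExp)
    (fun N => condExp_nonneg (hnn N)) (by simpa only [integral_condExp hm] using h)

theorem ae_dist_condExp_le {g h : α → E} {G : α → ℝ} (hg : Integrable g μ)
    (hh : Integrable h μ) (hG : Integrable G μ) (hle : (fun ω => ‖g ω - h ω‖) ≤ᵐ[μ] G) :
    ∀ᵐ ω ∂μ, dist ((μ[g | m]) ω) ((μ[h | m]) ω) ≤ (μ[G | m]) ω := by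
  filter_upwards [condExp_sub hg hh m, norm_condExp_le (μ := μ) (m := m) (g - h),
    condExp_mono (m := m) (hg.sub hh).norm hG hle] with ω hsub hnorm hmono
  rw [dist_eq_norm, ← Pi.sub_apply, ← hsub]
  exact hnorm.trans hmono

theorem condExp_smul_const {r : α → ℝ} (hr : Integrable r μ) (c : E) :
    μ[fun ω => r ω • c | m] =ᵐ[μ] fun ω => (μ[r | m]) ω • c :=
  ((ContinuousLinearMap.smulRight (1 : ℝ →L[ℝ] ℝ) c).comp_condExp_comm hr).symm

end CondExp

section Filtration

variable {α E : Type*} [NormedAddCommGroup E] [NormedSpace ℝ E] [CompleteSpace E]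
  {m0 : MeasurableSpace α} {μ : Measure α} [IsFiniteMeasure μ] (ℱ : Filtration ℕ m0)

theorem tendsto_ae_condExp_of_approx {g : α → E} {s : ℕ → α → E} (hg : Integrable g μ)
    (hs : ∀ k, Integrable (s k) μ) (hsg : Tendsto (fun k => ∫ ω, ‖g ω - s k ω‖ ∂μ) atTop (𝓝 0))
    (hlevy : ∀ k, ∀ᵐ ω ∂μ,
      Tendsto (fun n => (μ[s k | ℱ n]) ω) atTop (𝓝 ((μ[s k | ⨆ n, ℱ n]) ω))) :
    ∀ᵐ ω ∂μ, Tendsto (fun n => (μ[g | ℱ n]) ω) atTop (𝓝 ((μ[g | ⨆ n, ℱ n]) ω)) := by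
  set u : ℕ → α → ℝ := fun k ω => ‖g ω - s k ω‖
  have hu_int : ∀ k, Integrable (u k) μ := fun k => (hg.sub (hs k)).norm
  obtain ⟨ns, hns⟩ := exists_seq_tendsto_ae_condExp_of_tendsto_integral (iSup_le ℱ.le)
    (u := u) (fun k => Eventually.of_forall fun ω => norm_nonneg _) hsg
  filter_upwards [hns, ae_all_iff.2 fun k => hlevy (ns k),
    ae_all_iff.2 fun k => tendsto_ae_condExp (ℱ := ℱ) (u (ns k)),
    ae_all_iff.2 fun k => ae_all_iff.2 fun n => ae_dist_condExp_le (m := ℱ n) hg (hs (ns k))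
      (hu_int (ns k)) EventuallyLE.rfl,
    ae_all_iff.2 fun k => ae_dist_condExp_le (m := ⨆ n, ℱ n) hg (hs (ns k))
      (hu_int (ns k)) EventuallyLE.rfl]
    with ω hu hs_lim hu_lim hdist hdist_sup
  refine tendsto_of_forall_eventually_dist_le
    (b := fun k n => (μ[u (ns k) | ℱ n]) ω
      + dist ((μ[s (ns k) | ℱ n]) ω) ((μ[s (ns k) | ⨆ n, ℱ n]) ω) + (μ[u (ns k) | ⨆ n, ℱ n]) ω)
    (fun k => ((hu_lim k).add (tendsto_iff_dist_tendsto_zero.1 (hs_lim k))).add_const _)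
    (by simpa using hu.add hu) fun k => Eventually.of_forall fun n => ?_
  calc _ ≤ dist ((μ[g | ℱ n]) ω) ((μ[s (ns k) | ℱ n]) ω)
        + dist ((μ[s (ns k) | ℱ n]) ω) ((μ[s (ns k) | ⨆ n, ℱ n]) ω)
        + dist ((μ[s (ns k) | ⨆ n, ℱ n]) ω) ((μ[g | ⨆ n, ℱ n]) ω) := dist_triangle4 _ _ _ _
    _ ≤ _ := by
      rw [dist_comm ((μ[s (ns k) | ⨆ n, ℱ n]) ω)]
      gcongr
      exacts [hdist k n, hdist_sup k]

/-- Lévy's upward theorem for Banach-space-valued functions. -/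
theorem tendsto_ae_condExp_of_integrable {g : α → E} (hg : Integrable g μ) :
    ∀ᵐ ω ∂μ, Tendsto (fun n => (μ[g | ℱ n]) ω) atTop (𝓝 ((μ[g | ⨆ n, ℱ n]) ω)) := by
  refine Integrable.induction (P := fun g => ∀ᵐ ω ∂μ,
    Tendsto (fun n => (μ[g | ℱ n]) ω) atTop (𝓝 ((μ[g | ⨆ n, ℱ n]) ω))) ?_ ?_ ?_ ?_ hg
  · intro c s hs _
    have hr : Integrable (s.indicator 1 : α → ℝ) μ := (integrable_const 1).indicator hs
    have heq : (s.indicator fun _ => c) = fun ω => (s.indicator 1 : α → ℝ) ω • c := by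
      ext ω
      by_cases hω : ω ∈ s <;> simp [hω]
    rw [heq]
    filter_upwards [tendsto_ae_condExp (ℱ := ℱ) (s.indicator 1),
      ae_all_iff.2 fun n => condExp_smul_const (m := ℱ n) hr c,
      condExp_smul_const (m := ⨆ n, ℱ n) hr c] with ω hlevy hn hsup
    rw [hsup]
    exact (hlevy.smul_const c).congr fun n => (hn n).symm
  · intro g₁ g₂ _ hg₁ hg₂ hlevy₁ hlevy₂
    filter_upwards [hlevy₁, hlevy₂, ae_all_iff.2 fun n => condExp_add hg₁ hg₂ (ℱ n),
      condExp_add hg₁ hg₂ (⨆ n, ℱ n)] with ω h₁ h₂ hn hsup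
    rw [hsup, Pi.add_apply]
    exact (h₁.add h₂).congr fun n => by rw [hn n, Pi.add_apply]
  · refine IsSeqClosed.isClosed fun x p hx hxp => ?_
    refine tendsto_ae_condExp_of_approx ℱ (L1.integrable_coeFn p)
      (fun k => L1.integrable_coeFn (x k)) ?_ hx
    simp_rw [← dist_eq_norm, ← L1.dist_eq_integral_dist, dist_comm p]
    exact tendsto_iff_dist_tendsto_zero.1 hxp
  · intro g₁ g₂ heq _ hlevy
    filter_upwards [hlevy, ae_all_iff.2 fun n => condExp_congr_ae (m := ℱ n) heq,
      condExp_congr_ae (m := ⨆ n, ℱ n) heq] with ω h hn hsup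
    rw [← hsup]
    exact h.congr hn

/-- Two-parameter **Hunt's lemma**. -/
theorem tendsto_ae_condExp_of_dominated {g : ℕ → α → E} {g_lim : α → E} {H : α → ℝ}
    (hg : ∀ n, AEStronglyMeasurable (g n) μ) (hH : Integrable H μ)
    (hgH : ∀ n, ∀ᵐ ω ∂μ, ‖g n ω‖ ≤ H ω)
    (hlim : ∀ᵐ ω ∂μ, Tendsto (fun n => g n ω) atTop (𝓝 (g_lim ω))) :
    ∀ᵐ ω ∂μ, Tendsto (fun q : ℕ × ℕ => (μ[g q.1 | ℱ q.2]) ω) atTop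
      (𝓝 ((μ[g_lim | ⨆ n, ℱ n]) ω)) := by
  have hlimH : ∀ᵐ ω ∂μ, ‖g_lim ω‖ ≤ H ω := by
    filter_upwards [ae_all_iff.2 hgH, hlim] with ω hb hl
    exact le_of_tendsto' hl.norm hb
  have hg_int : ∀ n, Integrable (g n) μ := fun n => hH.mono' (hg n) (hgH n)
  have hlim_int : Integrable g_lim μ :=
    hH.mono' (aestronglyMeasurable_of_tendsto_ae atTop hg hlim) hlimH
  set u : ℕ → α → ℝ := fun n ω => ‖g n ω - g_lim ω‖
  have hu : ∀ n, AEStronglyMeasurable (u n) μ := fun n => ((hg n).sub hlim_int.1).norm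
  have hnn : ∀ n, 0 ≤ᵐ[μ] u n := fun n => Eventually.of_forall fun ω => norm_nonneg _
  have huH : ∀ n, ∀ᵐ ω ∂μ, u n ω ≤ 2 * H ω := fun n => by
    filter_upwards [hgH n, hlimH] with ω hgω hlimω
    linarith [norm_sub_le (g n ω) (g_lim ω)]
  have hu_lim : ∀ᵐ ω ∂μ, Tendsto (u · ω) atTop (𝓝 0) :=
    hlim.mono fun ω hω => tendsto_iff_norm_sub_tendsto_zero.1 hω
  set G : ℕ → α → ℝ := fun N ω => tailSup (u · ω) N
  obtain ⟨ns, hns⟩ := exists_seq_tendsto_ae_condExp_of_tendsto_integral (iSup_le ℱ.le)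
    (fun N => (hnn N).trans (ae_le_tailSup huH le_rfl))
    (tendsto_integral_tailSup hu (hH.const_mul 2) hnn huH hu_lim)
  have hkey : ∀ N n₁ n₂, ∀ᵐ ω ∂μ, N ≤ n₁ →
      dist ((μ[g n₁ | ℱ n₂]) ω) ((μ[g_lim | ℱ n₂]) ω) ≤ (μ[G N | ℱ n₂]) ω := by
    intro N n₁ n₂
    by_cases hN : N ≤ n₁
    · filter_upwards [ae_dist_condExp_le (m := ℱ n₂) (hg_int n₁) hlim_int
        (integrable_tailSup hu (hH.const_mul 2) hnn huH N) (ae_le_tailSup huH hN)] with ω h _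
      exact h
    · exact Eventually.of_forall fun _ h => absurd h hN
  have hsnd : Tendsto (Prod.snd : ℕ × ℕ → ℕ) atTop atTop :=
    tendsto_atTop_atTop_of_monotone (fun _ _ h => h.2) fun n => ⟨(0, n), le_rfl⟩
  filter_upwards [ae_all_iff.2 fun N => ae_all_iff.2 fun n₁ => ae_all_iff.2 (hkey N n₁), hns,
    ae_all_iff.2 fun k => tendsto_ae_condExp (ℱ := ℱ) (G (ns k)),
    tendsto_ae_condExp_of_integrable ℱ hlim_int] with ω hkey hns hG_lim hlim_lim
  refine tendsto_of_forall_eventually_dist_le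
    (b := fun k q => (μ[G (ns k) | ℱ q.2]) ω
      + dist ((μ[g_lim | ℱ q.2]) ω) ((μ[g_lim | ⨆ n, ℱ n]) ω))
    (fun k => ((hG_lim k).comp hsnd).add ((tendsto_iff_dist_tendsto_zero.1 hlim_lim).comp hsnd))
    (by simpa using hns) fun k => ?_
  filter_upwards [eventually_ge_atTop (ns k, 0)] with q hq
  exact (dist_triangle _ _ _).trans (add_le_add_left (hkey _ _ _ hq.1) _)

end Filtration

theorem MeasureTheory.MeasurePreserving.integral_comp_of_aestronglyMeasurable
    {Ω Ω' X : Type*} [MeasurableSpace Ω] [MeasurableSpace Ω'] [NormedAddCommGroup X]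
    [NormedSpace ℝ X] {μ : Measure Ω} {ν : Measure Ω'} {τ : Ω → Ω'}
    (hτ : MeasurePreserving τ μ ν) {g : Ω' → X} (hg : AEStronglyMeasurable g ν) :
    ∫ ω, g (τ ω) ∂μ = ∫ ω, g ω ∂ν := by
  rw [← hτ.map_eq] at hg ⊢
  exact (integral_map hτ.measurable.aemeasurable hg).symm

section Birkhoff

variable {Ω X : Type*} [MeasurableSpace Ω] [NormedAddCommGroup X] [NormedSpace ℝ X]
  {μ : Measure Ω} {τ : Ω → Ω} {f : Ω → X}

theorem integrable_birkhoff (hτ : MeasurePreserving τ μ μ) (hf : Integrable f μ) (n : ℕ) :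
    Integrable (birkhoff τ f n) μ :=
  (integrable_finsetSum _ fun i _ => (hτ.iterate i).integrable_comp_of_integrable hf).smul _

theorem integral_birkhoff (hτ : MeasurePreserving τ μ μ) (hf : Integrable f μ) {n : ℕ}
    (hn : n ≠ 0) : ∫ ω, birkhoff τ f n ω ∂μ = ∫ ω, f ω ∂μ := by
  have hcomp (i : ℕ) : Integrable (fun ω => f (τ^[i] ω)) μ :=
    (hτ.iterate i).integrable_comp_of_integrable hf
  simp only [birkhoff]
  rw [integral_smul, integral_finsetSum _ fun i _ => hcomp i]
  simp_rw [(hτ.iterate _).integral_comp_of_aestronglyMeasurable hf.1]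
  rw [Finset.sum_const, Finset.card_range, ← Nat.cast_smul_eq_nsmul ℝ, smul_smul,
    inv_mul_cancel₀ (Nat.cast_ne_zero.2 hn), one_smul]

theorem integral_eq_of_tendsto_birkhoff (hτ : MeasurePreserving τ μ μ) (hf : Integrable f μ)
    {H : Ω → ℝ} (hH : Integrable H μ) (hfH : ∀ n, ∀ᵐ ω ∂μ, ‖birkhoff τ f n ω‖ ≤ H ω)
    {f_lim : Ω → X} (hlim : ∀ᵐ ω ∂μ, Tendsto (fun n => birkhoff τ f n ω) atTop (𝓝 (f_lim ω))) :
    ∫ ω, f_lim ω ∂μ = ∫ ω, f ω ∂μ :=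
  tendsto_nhds_unique
    (tendsto_integral_of_dominated_convergence H (fun n => (integrable_birkhoff hτ hf n).1) hH
      hfH hlim)
    (tendsto_const_nhds.congr' ((eventually_ne_atTop 0).mono fun _ hn =>
      (integral_birkhoff hτ hf hn).symm))

end Birkhoff

/-- For `T` induced by a measure-preserving endomorphism, `f ∈ L₁(Ω, X)` with
`sup_n ‖S_n f‖_X ∈ L₁`, `fstar` the a.e. limit of `S_n f`, and `F n ↑ Finf` increasing
σ-subalgebras, `E(S_{n₁} f | F_{n₂}) → E(fstar | Finf)` a.e. as `n₁, n₂ → ∞` independently,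
and `∫ E(fstar|Finf) dμ = ∫ f dμ`. -/
theorem stmt5 {Ω X : Type*} [MeasurableSpace Ω] [NormedAddCommGroup X] [NormedSpace ℝ X]
    [CompleteSpace X]
    (hX : Function.Surjective (NormedSpace.inclusionInDoubleDual ℝ X))
    (μ : Measure Ω) [IsFiniteMeasure μ]
    (τ : Ω → Ω) (hτ : MeasurePreserving τ μ μ)
    (f : Ω → X) (hf : Integrable f μ)
    (hsup : Integrable (fun ω => ⨆ n, ‖birkhoff τ f n ω‖) μ)
    (fstar : Ω → X) (hfstar : Integrable fstar μ)
    (hlim : ∀ᵐ ω ∂μ, Tendsto (fun n => birkhoff τ f n ω) atTop (𝓝 (fstar ω)))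
    (F : ℕ → MeasurableSpace Ω) (hle : ∀ n, F n ≤ ‹MeasurableSpace Ω›)
    (hmono : Monotone F)
    (Finf : MeasurableSpace Ω) (hFinf : Finf = ⨆ n, F n) :
    (∀ᵐ ω ∂μ, Tendsto (fun q : ℕ × ℕ => (μ[birkhoff τ f q.1 | F q.2]) ω) atTop
      (𝓝 ((μ[fstar | Finf]) ω))) ∧
    ∫ ω, (μ[fstar | Finf]) ω ∂μ = ∫ ω, f ω ∂μ := by
  subst hFinf
  have hbound : ∀ n, ∀ᵐ ω ∂μ, ‖birkhoff τ f n ω‖ ≤ ⨆ m, ‖birkhoff τ f m ω‖ := fun n =>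
    hlim.mono fun ω hω => le_ciSup hω.norm.bddAbove_range n
  refine ⟨tendsto_ae_condExp_of_dominated ⟨F, hmono, hle⟩
    (fun n => (integrable_birkhoff hτ hf n).1) hsup hbound hlim, ?_⟩
  rw [integral_condExp (iSup_le hle), integral_eq_of_tendsto_birkhoff hτ hf hsup hbound hlim]
end
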